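/- arXiv:1908.05583 — 6 statements merged into one kernel-verified Lean document; each statement's English description precedes it below -/
import Mathlib

section
/- The regularized maximum is smooth: for every p ≥ 1 and every η = (η_1,…,η_p) with all η_j > 0, the function M_η : ℝ^p → ℝ is infinitely differentiable (C^∞) on ℝ^p. -/
open MeasureTheory
open scoped Convolution

/-! Substituting `u = t + h` writes `M_η` as the convolution of the continuous function
`u ↦ max_j u_j` with the reflected kernel `h ↦ ∏_j η_j⁻¹ ρ(-h_j / η_j)`, which is smooth with
compact support; such a convolution is smooth. -/

theorem continuous_iSup_apply {ι α : Type*} [Finite ι] [ConditionallyCompleteLinearOrder α]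
    [TopologicalSpace α] [OrderTopology α] :
    Continuous fun u : ι → α => ⨆ i, u i := by
  cases isEmpty_or_nonempty ι
  · simp only [iSup_of_empty']
    exact continuous_const
  · have := Fintype.ofFinite ι
    simp only [← Finset.sup'_univ_eq_ciSup]
    exact Continuous.finset_sup'_apply Finset.univ_nonempty fun i _ => continuous_apply i

theorem hasCompactSupport_prod_apply {ι M : Type*} {X : ι → Type*} [Fintype ι]
    [∀ i, TopologicalSpace (X i)] [CommMonoidWithZero M] {g : ∀ i, X i → M}
    (hg : ∀ i, HasCompactSupport (g i)) :
    HasCompactSupport fun x : (∀ i, X i) => ∏ i, g i (x i) := by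
  refine .intro' (isCompact_univ_pi hg) (isClosed_set_pi fun i _ => isClosed_tsupport _)
    fun x hx => ?_
  obtain ⟨i, hi⟩ := not_forall.mp (mt Set.mem_univ_pi.mpr hx)
  exact Finset.prod_eq_zero (Finset.mem_univ i) (image_eq_zero_of_notMem_tsupport hi)

theorem HasCompactSupport.inv_mul_comp_div {ρ : ℝ → ℝ} (hρ : HasCompactSupport ρ) (c : ℝ) :
    HasCompactSupport fun x => c⁻¹ * ρ (x / c) := by
  rcases eq_or_ne c 0 with rfl | hc
  · simp only [inv_zero, zero_mul]
    exact .zero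
  · simpa only [div_eq_inv_mul, smul_eq_mul, Pi.mul_def] using
      (hρ.comp_smul (inv_ne_zero hc)).mul_left

section Convolution

variable {𝕜 G : Type*} [RCLike 𝕜] [NormedAddCommGroup G] [MeasurableSpace G] {μ : Measure G}
  [μ.IsAddLeftInvariant]

theorem integral_comp_add_mul_eq_convolution [MeasurableAdd G] (f φ : G → 𝕜) (x : G) :
    ∫ h, f (x + h) * φ h ∂μ = (f ⋆[ContinuousLinearMap.lsmul 𝕜 𝕜, μ] fun y => φ (-y)) x := by
  rw [convolution_lsmul, ← integral_add_left_eq_self (fun t => f t • φ (-(x - t))) x]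
  simp only [smul_eq_mul, neg_sub, add_sub_cancel_left]

theorem contDiff_integral_comp_add_mul [NormedSpace 𝕜 G] [BorelSpace G] [SFinite μ] {n : ℕ∞}
    {f φ : G → 𝕜} (hf : LocallyIntegrable f μ) (hφ : HasCompactSupport φ)
    (hφ' : ContDiff 𝕜 n φ) :
    ContDiff 𝕜 n fun x => ∫ h, f (x + h) * φ h ∂μ := by
  simp only [integral_comp_add_mul_eq_convolution]
  exact hφ.comp_homeomorph (Homeomorph.neg G) |>.contDiff_convolution_right _ hf
    (hφ'.comp contDiff_neg)

end Convolution

theorem regularized_max_smooth_general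
    (ρ : ℝ → ℝ)
    (hρ_smooth : ContDiff ℝ (⊤ : ℕ∞) ρ)
    (hρ_supp : Function.support ρ ⊆ Set.Icc (-1 : ℝ) 1)
    (p : ℕ)
    (η : Fin p → ℝ)
    (M : (Fin p → ℝ) → ℝ)
    (hM : ∀ t : Fin p → ℝ,
      M t = ∫ h : Fin p → ℝ,
        (⨆ j, (t j + h j)) * ∏ j, (η j)⁻¹ * ρ (h j / η j)) :
    ContDiff ℝ (⊤ : ℕ∞) M := by
  have hρ : HasCompactSupport ρ :=
    .intro isCompact_Icc fun x hx => Function.notMem_support.mp (mt (hρ_supp ·) hx)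
  rw [show M = fun t => ∫ h, (⨆ j, (t + h) j) * ∏ j, (η j)⁻¹ * ρ (h j / η j) from funext hM]
  refine contDiff_integral_comp_add_mul (μ := volume) (f := fun u => ⨆ j, u j)
    continuous_iSup_apply.locallyIntegrable
    (hasCompactSupport_prod_apply fun j => hρ.inv_mul_comp_div (η j)) ?_
  exact contDiff_prod fun j _ =>
    contDiff_const.mul (hρ_smooth.comp ((contDiff_apply ℝ ℝ j).div_const (η j)))

/-- **Smoothness of the regularized maximum.**
For every `p ≥ 1` and every `η = (η₁, …, η_p)` with all `η_j > 0`, the regularized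
maximum `M_η : ℝ^p → ℝ`, defined by
`M_η(t) = ∫_{ℝ^p} max_j (t_j + h_j) ∏_j η_j⁻¹ ρ(h_j / η_j) dh`,
is infinitely differentiable on `ℝ^p`. -/
theorem regularized_max_smooth
    (ρ : ℝ → ℝ)
    (hρ_smooth : ContDiff ℝ (⊤ : ℕ∞) ρ)
    (hρ_nonneg : ∀ x, 0 ≤ ρ x)
    (hρ_supp : Function.support ρ ⊆ Set.Icc (-1 : ℝ) 1)
    (hρ_int : ∫ x : ℝ, ρ x = 1)
    (hρ_mean : ∫ x : ℝ, x * ρ x = 0)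
    (p : ℕ) (hp : 1 ≤ p)
    (η : Fin p → ℝ) (hη : ∀ j, 0 < η j)
    (M : (Fin p → ℝ) → ℝ)
    (hM : ∀ t : Fin p → ℝ,
      M t = ∫ h : Fin p → ℝ,
        (⨆ j, (t j + h j)) * ∏ j, (η j)⁻¹ * ρ (h j / η j)) :
    ContDiff ℝ (⊤ : ℕ∞) M :=
  regularized_max_smooth_general ρ hρ_smooth hρ_supp p η M hM
end

section
/- The regularized maximum is convex: for every p ≥ 1 and every η ∈ (0,∞)^p, the function M_η : ℝ^p → ℝ is convex on ℝ^p. -/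
open MeasureTheory

/-- **Convexity of the regularized maximum.** -/
theorem regularized_max_convex
    (ρ : ℝ → ℝ)
    (hρ_smooth : ContDiff ℝ (⊤ : ℕ∞) ρ)
    (hρ_nonneg : ∀ x, 0 ≤ ρ x)
    (hρ_supp : Function.support ρ ⊆ Set.Icc (-1 : ℝ) 1)
    (hρ_int : ∫ x : ℝ, ρ x = 1)
    (hρ_mean : ∫ x : ℝ, x * ρ x = 0)
    (p : ℕ) (hp : 1 ≤ p)
    (η : Fin p → ℝ) (hη : ∀ j, 0 < η j)
    (M : (Fin p → ℝ) → ℝ)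
    (hM : ∀ t : Fin p → ℝ,
      M t = ∫ h : Fin p → ℝ,
        (⨆ j, (t j + h j)) * ∏ j, (η j)⁻¹ * ρ (h j / η j)) :
    ConvexOn ℝ Set.univ M := by
  have hp' : Nonempty (Fin p) := ⟨⟨0, hp⟩⟩
  set W : (Fin p → ℝ) → ℝ := fun h => ∏ j, (η j)⁻¹ * ρ (h j / η j) with hWdef
  have hWnn : ∀ h, 0 ≤ W h := fun h =>
    Finset.prod_nonneg fun j _ => mul_nonneg (inv_nonneg.2 (hη j).le) (hρ_nonneg _)
  have hWcont : Continuous W := by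
    apply continuous_finset_prod
    intro j _
    exact continuous_const.mul (hρ_smooth.continuous.comp ((continuous_apply j).div_const _))
  have hWsupp : ∀ h : Fin p → ℝ, h ∉ Set.pi Set.univ (fun j => Set.Icc (-(η j)) (η j)) →
      W h = 0 := by
    intro h hh
    simp only [Set.mem_pi, Set.mem_univ, forall_true_left] at hh
    push_neg at hh
    obtain ⟨j, hj⟩ := hh
    have hρ0 : ρ (h j / η j) = 0 := by
      by_contra h0
      have := hρ_supp (Function.mem_support.2 h0)
      rw [Set.mem_Icc] at this
      apply hj
      rw [Set.mem_Icc]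
      have h1 := (le_div_iff₀ (hη j)).1 this.1
      have h2 := (div_le_iff₀ (hη j)).1 this.2
      constructor <;> linarith
    exact Finset.prod_eq_zero (Finset.mem_univ j) (by rw [hρ0, mul_zero])
  have hsupcont : ∀ t : Fin p → ℝ, Continuous (fun h : Fin p → ℝ => ⨆ j, (t j + h j)) := by
    intro t
    have : (fun h : Fin p → ℝ => ⨆ j, (t j + h j)) =
        Finset.univ.sup' Finset.univ_nonempty (fun j (h : Fin p → ℝ) => t j + h j) := by
      funext h
      rw [← Finset.sup'_univ_eq_ciSup]
      simp [Finset.sup'_apply]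
    rw [this]
    exact Continuous.finset_sup' Finset.univ_nonempty
      (fun j _ => continuous_const.add (continuous_apply j))
  have hint : ∀ t : Fin p → ℝ,
      Integrable (fun h : Fin p → ℝ => (⨆ j, (t j + h j)) * W h) := by
    intro t
    apply Continuous.integrable_of_hasCompactSupport
    · exact (hsupcont t).mul hWcont
    · apply HasCompactSupport.intro (isCompact_univ_pi fun j => isCompact_Icc)
      intro h hh
      rw [hWsupp h hh, mul_zero]
  constructor
  · exact convex_univ
  intro x _ y _ a b ha hb hab
  simp only [smul_eq_mul]
  rw [hM, hM, hM]
  have key : ∀ h : Fin p → ℝ,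
      (⨆ j, ((a • x + b • y) j + h j)) * W h ≤
        a * ((⨆ j, (x j + h j)) * W h) + b * ((⨆ j, (y j + h j)) * W h) := by
    intro h
    have hb1 : BddAbove (Set.range fun j => x j + h j) := (Set.finite_range _).bddAbove
    have hb2 : BddAbove (Set.range fun j => y j + h j) := (Set.finite_range _).bddAbove
    have hsup : (⨆ j, ((a • x + b • y) j + h j)) ≤
        a * (⨆ j, (x j + h j)) + b * (⨆ j, (y j + h j)) := by
      apply ciSup_le
      intro j
      have h1 : x j + h j ≤ ⨆ i, (x i + h i) := le_ciSup hb1 j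
      have h2 : y j + h j ≤ ⨆ i, (y i + h i) := le_ciSup hb2 j
      have hcomb : (a • x + b • y) j + h j = a * (x j + h j) + b * (y j + h j) := by
        simp only [Pi.add_apply, Pi.smul_apply, smul_eq_mul]
        have : a * h j + b * h j = h j := by rw [← add_mul, hab, one_mul]
        linarith
      rw [hcomb]
      have := mul_le_mul_of_nonneg_left h1 ha
      have := mul_le_mul_of_nonneg_left h2 hb
      linarith
    calc (⨆ j, ((a • x + b • y) j + h j)) * W h
        ≤ (a * (⨆ j, (x j + h j)) + b * (⨆ j, (y j + h j))) * W h :=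
          mul_le_mul_of_nonneg_right hsup (hWnn h)
      _ = a * ((⨆ j, (x j + h j)) * W h) + b * ((⨆ j, (y j + h j)) * W h) := by ring
  calc (∫ h : Fin p → ℝ, (⨆ j, ((a • x + b • y) j + h j)) * W h)
      ≤ ∫ h : Fin p → ℝ,
          a * ((⨆ j, (x j + h j)) * W h) + b * ((⨆ j, (y j + h j)) * W h) := by
        exact integral_mono (hint _) (((hint x).const_mul a).add ((hint y).const_mul b)) key
    _ = a * (∫ h : Fin p → ℝ, (⨆ j, (x j + h j)) * W h)
        + b * (∫ h : Fin p → ℝ, (⨆ j, (y j + h j)) * W h) := by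
        rw [integral_add ((hint x).const_mul a) ((hint y).const_mul b),
          integral_const_mul, integral_const_mul]
end

section
/- The regularized maximum is squeezed between the maximum and a shifted maximum: for every p ≥ 1, every η ∈ (0,∞)^p and every t ∈ ℝ^p, one has max{t_1,…,t_p} ≤ M_η(t_1,…,t_p) ≤ max{t_1+η_1,…,t_p+η_p}. -/
/-! The kernel `h ↦ ∏ⱼ ηⱼ⁻¹ ρ(hⱼ/ηⱼ)` is a probability density on the box `∏ⱼ [-ηⱼ, ηⱼ]` whose
coordinates have mean zero (Fubini). Integrating `maxⱼ (tⱼ + hⱼ) ≥ tᵢ + hᵢ` against it gives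
`tᵢ`, while on the box `maxⱼ (tⱼ + hⱼ) ≤ maxⱼ (tⱼ + ηⱼ)`. -/

open MeasureTheory Set Function

theorem MeasureTheory.Integrable.continuous_mul_of_support_subset
    {X : Type*} [TopologicalSpace X] [T2Space X] [MeasurableSpace X] [OpensMeasurableSpace X]
    {μ : Measure X} {f g : X → ℝ} {s : Set X} (hf : Continuous f) (hg : Integrable g μ)
    (hs : IsCompact s) (hgs : support g ⊆ s) :
    Integrable (fun x => f x * g x) μ :=
  (integrableOn_iff_integrable_of_support_subset ((support_mul_subset_right _ _).trans hgs)).1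
    (hg.integrableOn.continuousOn_mul hf.continuousOn hs)

lemma continuous_ciSup_of_fintype {ι X : Type*} [Fintype ι] [TopologicalSpace X]
    {f : ι → X → ℝ} (hf : ∀ j, Continuous (f j)) : Continuous fun x => ⨆ j, f j x := by
  rcases isEmpty_or_nonempty ι with hι | hι
  · simp only [Real.iSup_of_isEmpty]
    exact continuous_const
  · simpa only [← Finset.sup'_univ_eq_ciSup] using
      Continuous.finset_sup'_apply Finset.univ_nonempty fun j _ => hf j

section Rescale

variable {ρ : ℝ → ℝ} {η : ℝ}

lemma integrable_inv_mul_comp_div (hρ : Integrable ρ) (η : ℝ) :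
    Integrable fun x => η⁻¹ * ρ (x / η) := by
  rcases eq_or_ne η 0 with rfl | hη
  · simp
  · exact (hρ.comp_div hη).const_mul _

lemma integral_inv_mul_comp_div (hη : 0 < η) : ∫ x, η⁻¹ * ρ (x / η) = ∫ x, ρ x := by
  rw [integral_const_mul, Measure.integral_comp_div, abs_of_pos hη, smul_eq_mul,
    inv_mul_cancel_left₀ hη.ne']

lemma integral_mul_inv_mul_comp_div (hη : 0 < η) :
    ∫ x, x * (η⁻¹ * ρ (x / η)) = η * ∫ x, x * ρ x := by
  have h : (fun x => x * (η⁻¹ * ρ (x / η))) = fun x => (fun y => y * ρ y) (x / η) := by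
    ext x; ring
  rw [h, Measure.integral_comp_div (fun y => y * ρ y), abs_of_pos hη, smul_eq_mul]

lemma support_inv_mul_comp_div_subset (hρ : support ρ ⊆ Icc (-1) 1) (hη : 0 < η) :
    support (fun x => η⁻¹ * ρ (x / η)) ⊆ Icc (-η) η := by
  intro x hx
  have h := hρ (right_ne_zero_of_mul hx)
  rw [mem_Icc, le_div_iff₀ hη, div_le_one hη] at h
  constructor <;> linarith [h.1, h.2]

end Rescale

section ProductKernel

variable {ι : Type*} [Fintype ι] {g : ι → ℝ → ℝ} {a b : ι → ℝ}

lemma support_prod_apply_subset (hg : ∀ j, support (g j) ⊆ Icc (a j) (b j)) :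
    support (fun h : ι → ℝ => ∏ j, g j (h j)) ⊆ univ.pi fun j => Icc (a j) (b j) :=
  fun _ hh j _ => hg j (Finset.prod_ne_zero_iff.1 hh j (Finset.mem_univ j))

lemma integrable_mul_prod_apply (hg : ∀ j, Integrable (g j))
    (hg_supp : ∀ j, support (g j) ⊆ Icc (a j) (b j)) {S : (ι → ℝ) → ℝ} (hS : Continuous S) :
    Integrable fun h => S h * ∏ j, g j (h j) :=
  (Integrable.fintype_prod hg).continuous_mul_of_support_subset hS
    (isCompact_univ_pi fun _ => isCompact_Icc) (support_prod_apply_subset hg_supp)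

lemma integral_prod_apply_eq_one (hg : ∀ j, ∫ x, g j x = 1) :
    ∫ h : ι → ℝ, ∏ j, g j (h j) = 1 := by
  simp [integral_fintype_prod_volume_eq_prod, hg]

lemma integral_apply_mul_prod_apply_eq_zero (i : ι) (hg : ∫ x, x * g i x = 0) :
    ∫ h : ι → ℝ, h i * ∏ j, g j (h j) = 0 := by
  classical
  have h : (fun h : ι → ℝ => h i * ∏ j, g j (h j)) =
      fun h => ∏ j, update g i (fun x => x * g i x) j (h j) := by
    ext h
    rw [← Finset.mul_prod_erase _ _ (Finset.mem_univ i),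
      ← Finset.mul_prod_erase _ _ (Finset.mem_univ i), update_self, mul_assoc]
    congr 2
    exact Finset.prod_congr rfl fun j hj => by rw [update_of_ne (Finset.ne_of_mem_erase hj)]
  rw [h, integral_fintype_prod_volume_eq_prod]
  exact Finset.prod_eq_zero (Finset.mem_univ i) (by rwa [update_self])

lemma le_integral_iSup_add_mul_prod_apply (hg_nonneg : ∀ j x, 0 ≤ g j x)
    (hg : ∀ j, Integrable (g j)) (hg_supp : ∀ j, support (g j) ⊆ Icc (a j) (b j))
    (hg_one : ∀ j, ∫ x, g j x = 1) (t : ι → ℝ) (i : ι) (hg_mean : ∫ x, x * g i x = 0) :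
    t i ≤ ∫ h : ι → ℝ, (⨆ j, t j + h j) * ∏ j, g j (h j) :=
  calc t i = ∫ h : ι → ℝ, (t i + h i) * ∏ j, g j (h j) := by
        simp_rw [add_mul]
        rw [integral_add (integrable_mul_prod_apply hg hg_supp continuous_const)
          (integrable_mul_prod_apply hg hg_supp (continuous_apply i)), integral_const_mul,
          integral_prod_apply_eq_one hg_one, integral_apply_mul_prod_apply_eq_zero i hg_mean,
          mul_one, add_zero]
    _ ≤ _ := by
        refine integral_mono
          (integrable_mul_prod_apply hg hg_supp (continuous_const.add (continuous_apply i)))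
          (integrable_mul_prod_apply hg hg_supp
            (continuous_ciSup_of_fintype fun j => continuous_const.add (continuous_apply j)))
          fun h => mul_le_mul_of_nonneg_right ?_ (Finset.prod_nonneg fun j _ => hg_nonneg j _)
        exact le_ciSup (f := fun j => t j + h j) (finite_range _).bddAbove i

lemma integral_iSup_add_mul_prod_apply_le (hg_nonneg : ∀ j x, 0 ≤ g j x)
    (hg : ∀ j, Integrable (g j)) (hg_supp : ∀ j, support (g j) ⊆ Icc (a j) (b j))
    (hg_one : ∀ j, ∫ x, g j x = 1) (t : ι → ℝ) :
    ∫ h : ι → ℝ, (⨆ j, t j + h j) * ∏ j, g j (h j) ≤ ⨆ j, t j + b j :=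
  calc _ ≤ ∫ h : ι → ℝ, (⨆ j, t j + b j) * ∏ j, g j (h j) := by
        refine integral_mono
          (integrable_mul_prod_apply hg hg_supp
            (continuous_ciSup_of_fintype fun j => continuous_const.add (continuous_apply j)))
          (integrable_mul_prod_apply hg hg_supp continuous_const) fun h => ?_
        by_cases hK : ∏ j, g j (h j) = 0
        · simp [hK]
        refine mul_le_mul_of_nonneg_right ?_ (Finset.prod_nonneg fun j _ => hg_nonneg j _)
        exact ciSup_mono (finite_range _).bddAbove fun j =>
          add_le_add_right (support_prod_apply_subset hg_supp hK j (mem_univ j)).2 _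
    _ = _ := by rw [integral_const_mul, integral_prod_apply_eq_one hg_one, mul_one]

end ProductKernel

theorem regularized_max_squeeze_general
    (ρ : ℝ → ℝ)
    (hρ_nonneg : ∀ x, 0 ≤ ρ x)
    (hρ_supp : Function.support ρ ⊆ Set.Icc (-1 : ℝ) 1)
    (hρ_int : ∫ x : ℝ, ρ x = 1)
    (hρ_mean : ∫ x : ℝ, x * ρ x = 0)
    (p : ℕ) (hp : 1 ≤ p)
    (η : Fin p → ℝ) (hη : ∀ j, 0 < η j)
    (M : (Fin p → ℝ) → ℝ)
    (hM : ∀ t : Fin p → ℝ,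
      M t = ∫ h : Fin p → ℝ,
        (⨆ j, (t j + h j)) * ∏ j, (η j)⁻¹ * ρ (h j / η j)) :
    ∀ t : Fin p → ℝ,
      (⨆ j, t j) ≤ M t ∧ M t ≤ ⨆ j, (t j + η j) := by
  have : Nonempty (Fin p) := ⟨⟨0, hp⟩⟩
  have hρ : Integrable ρ := Integrable.of_integral_ne_zero (by simp [hρ_int])
  have hg_nonneg : ∀ j x, 0 ≤ (η j)⁻¹ * ρ (x / η j) := fun j x =>
    mul_nonneg (inv_nonneg.2 (hη j).le) (hρ_nonneg _)
  have hg : ∀ j, Integrable fun x => (η j)⁻¹ * ρ (x / η j) := fun j =>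
    integrable_inv_mul_comp_div hρ (η j)
  have hg_supp : ∀ j, support (fun x => (η j)⁻¹ * ρ (x / η j)) ⊆ Icc (-η j) (η j) := fun j =>
    support_inv_mul_comp_div_subset hρ_supp (hη j)
  have hg_one : ∀ j, ∫ x, (η j)⁻¹ * ρ (x / η j) = 1 := fun j => by
    rw [integral_inv_mul_comp_div (hη j), hρ_int]
  have hg_mean : ∀ j, ∫ x, x * ((η j)⁻¹ * ρ (x / η j)) = 0 := fun j => by
    rw [integral_mul_inv_mul_comp_div (hη j), hρ_mean, mul_zero]
  intro t
  rw [hM t]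
  exact ⟨ciSup_le fun i =>
      le_integral_iSup_add_mul_prod_apply hg_nonneg hg hg_supp hg_one t i (hg_mean i),
    integral_iSup_add_mul_prod_apply_le hg_nonneg hg hg_supp hg_one t⟩

/-- **The regularized maximum is squeezed between the max and a shifted max.** -/
theorem regularized_max_squeeze
    (ρ : ℝ → ℝ)
    (hρ_smooth : ContDiff ℝ (⊤ : ℕ∞) ρ)
    (hρ_nonneg : ∀ x, 0 ≤ ρ x)
    (hρ_supp : Function.support ρ ⊆ Set.Icc (-1 : ℝ) 1)
    (hρ_int : ∫ x : ℝ, ρ x = 1)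
    (hρ_mean : ∫ x : ℝ, x * ρ x = 0)
    (p : ℕ) (hp : 1 ≤ p)
    (η : Fin p → ℝ) (hη : ∀ j, 0 < η j)
    (M : (Fin p → ℝ) → ℝ)
    (hM : ∀ t : Fin p → ℝ,
      M t = ∫ h : Fin p → ℝ,
        (⨆ j, (t j + h j)) * ∏ j, (η j)⁻¹ * ρ (h j / η j)) :
    ∀ t : Fin p → ℝ,
      (⨆ j, t j) ≤ M t ∧ M t ≤ ⨆ j, (t j + η j) :=
  regularized_max_squeeze_general ρ hρ_nonneg hρ_supp hρ_int hρ_mean p hp η hη M hM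
end

section
/- Dominated variables drop out of the regularized maximum: for p ≥ 2, η ∈ (0,∞)^p, t ∈ ℝ^p and an index j, if t_j + η_j ≤ max_{k ≠ j} (t_k − η_k), then M_η(t_1,…,t_p) = M_{η'}(t'), where t' ∈ ℝ^{p−1} and η' ∈ (0,∞)^{p−1} are obtained from t and η by deleting the j-th coordinate. -/
open MeasureTheory

lemma ciSup_fin_split {n : ℕ} (hn : 1 ≤ n) (j : Fin (n + 1)) (f : Fin (n + 1) → ℝ) :
    (⨆ i, f i) = max (f j) (⨆ i : Fin n, f (j.succAbove i)) := by
  haveI : NeZero n := ⟨by omega⟩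
  apply le_antisymm
  · apply ciSup_le
    intro i
    rcases eq_or_ne i j with rfl | hij
    · exact le_max_left _ _
    · obtain ⟨k, rfl⟩ := Fin.exists_succAbove_eq hij
      exact le_max_of_le_right (le_ciSup (f := fun i => f (j.succAbove i)) (Set.Finite.bddAbove (Set.finite_range _)) k)
  · apply max_le
    · exact le_ciSup (Set.Finite.bddAbove (Set.finite_range f)) j
    · exact ciSup_le fun k => le_ciSup (Set.Finite.bddAbove (Set.finite_range f)) _

/-- **Dominated variables drop out of the regularized maximum.**
For `p = n + 1 ≥ 2`, if `t_j + η_j ≤ max_{k ≠ j} (t_k − η_k)`, then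
`M_η(t) = M_{η'}(t')`, where `t'` and `η'` are obtained from `t` and `η` by deleting
the `j`-th coordinate. -/
theorem regularized_max_drop_dominated
    (ρ : ℝ → ℝ)
    (hρ_smooth : ContDiff ℝ (⊤ : ℕ∞) ρ)
    (hρ_nonneg : ∀ x, 0 ≤ ρ x)
    (hρ_supp : Function.support ρ ⊆ Set.Icc (-1 : ℝ) 1)
    (hρ_int : ∫ x : ℝ, ρ x = 1)
    (hρ_mean : ∫ x : ℝ, x * ρ x = 0)
    (n : ℕ) (hn : 1 ≤ n)
    (η : Fin (n + 1) → ℝ) (hη : ∀ j, 0 < η j)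
    (M : (Fin (n + 1) → ℝ) → ℝ)
    (hM : ∀ t : Fin (n + 1) → ℝ,
      M t = ∫ h : Fin (n + 1) → ℝ,
        (⨆ j, (t j + h j)) * ∏ j, (η j)⁻¹ * ρ (h j / η j))
    (M' : (Fin n → ℝ) → ℝ)
    (j : Fin (n + 1))
    (hM' : ∀ s : Fin n → ℝ,
      M' s = ∫ h : Fin n → ℝ,
        (⨆ k, (s k + h k)) * ∏ k, (η (j.succAbove k))⁻¹ * ρ (h k / η (j.succAbove k)))
    (t : Fin (n + 1) → ℝ)
    (hdom : t j + η j ≤ ⨆ k : {k : Fin (n + 1) // k ≠ j}, (t k - η k)) :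
    M t = M' (t ∘ j.succAbove) := by
  haveI : NeZero n := ⟨by omega⟩
  -- the function on the product space
  set F : ℝ × (Fin n → ℝ) → ℝ := fun z =>
    ((η j)⁻¹ * ρ (z.1 / η j)) *
      ((⨆ k, (t (j.succAbove k) + z.2 k)) *
        ∏ k, (η (j.succAbove k))⁻¹ * ρ (z.2 k / η (j.succAbove k))) with hF
  have e := MeasurableEquiv.piFinSuccAbove (fun _ : Fin (n + 1) => ℝ) j
  have hmp := measurePreserving_piFinSuccAbove (fun _ : Fin (n + 1) => (volume : Measure ℝ)) j
  -- key pointwise identity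
  have key : ∀ h : Fin (n + 1) → ℝ,
      (⨆ i, (t i + h i)) * ∏ i, (η i)⁻¹ * ρ (h i / η i)
        = F (MeasurableEquiv.piFinSuccAbove (fun _ : Fin (n + 1) => ℝ) j h) := by
    intro h
    have hprod : (∏ i, (η i)⁻¹ * ρ (h i / η i))
        = ((η j)⁻¹ * ρ (h j / η j)) *
          ∏ k, (η (j.succAbove k))⁻¹ * ρ (h (j.succAbove k) / η (j.succAbove k)) :=
      Fin.prod_univ_succAbove (fun i => (η i)⁻¹ * ρ (h i / η i)) j
    have happly : (MeasurableEquiv.piFinSuccAbove (fun _ : Fin (n + 1) => ℝ) j h)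
        = (h j, fun k => h (j.succAbove k)) := rfl
    rw [happly]
    simp only [hF]
    by_cases hzero : (∏ i, (η i)⁻¹ * ρ (h i / η i)) = 0
    · rw [hzero]
      rw [hprod] at hzero
      rcases mul_eq_zero.mp hzero with h1 | h2
      · rw [h1]; ring
      · rw [h2]; ring
    · -- every factor nonzero, hence |h i| ≤ η i for all i
      have hbound : ∀ i, |h i| ≤ η i := by
        intro i
        have : (η i)⁻¹ * ρ (h i / η i) ≠ 0 := Finset.prod_ne_zero_iff.mp hzero i (by simp)
        have hρne : ρ (h i / η i) ≠ 0 := fun hc => this (by rw [hc]; ring)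
        have := hρ_supp hρne
        rw [abs_le]
        constructor
        · have h1 := (le_div_iff₀ (hη i)).mp this.1
          linarith
        · have h2 := (div_le_one (hη i)).mp this.2
          linarith
      -- the sup over all coordinates equals the sup over succAbove
      have hsup : (⨆ i, (t i + h i)) = ⨆ k, (t (j.succAbove k) + h (j.succAbove k)) := by
        haveI : Nonempty {k : Fin (n + 1) // k ≠ j} :=
          ⟨⟨j.succAbove ⟨0, by omega⟩, Fin.succAbove_ne j _⟩⟩
        rw [ciSup_fin_split hn j (fun i => t i + h i)]
        refine max_eq_right ?_
        calc t j + h j ≤ t j + η j := by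
              have := (abs_le.mp (hbound j)).2; linarith
          _ ≤ ⨆ k : {k : Fin (n + 1) // k ≠ j}, (t k - η k) := hdom
          _ ≤ ⨆ k, (t (j.succAbove k) + h (j.succAbove k)) := by
              apply ciSup_le
              rintro ⟨k, hk⟩
              obtain ⟨i, rfl⟩ := Fin.exists_succAbove_eq hk
              calc t (j.succAbove i) - η (j.succAbove i)
                  ≤ t (j.succAbove i) + h (j.succAbove i) := by
                    have := (abs_le.mp (hbound (j.succAbove i))).1; linarith
                _ ≤ _ := le_ciSup (f := fun k => t (j.succAbove k) + h (j.succAbove k))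
                      (Set.Finite.bddAbove (Set.finite_range _)) i
      rw [hsup, hprod]
      ring
  -- change of variables
  rw [hM t, hM' (t ∘ j.succAbove)]
  have hchange : (∫ h : Fin (n + 1) → ℝ,
      (⨆ i, (t i + h i)) * ∏ i, (η i)⁻¹ * ρ (h i / η i))
      = ∫ z : ℝ × (Fin n → ℝ), F z ∂((volume : Measure ℝ).prod
          (Measure.pi fun _ : Fin n => (volume : Measure ℝ))) := by
    rw [show (∫ h : Fin (n + 1) → ℝ,
        (⨆ i, (t i + h i)) * ∏ i, (η i)⁻¹ * ρ (h i / η i))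
        = ∫ h : Fin (n + 1) → ℝ,
            F (MeasurableEquiv.piFinSuccAbove (fun _ : Fin (n + 1) => ℝ) j h) from
      integral_congr_ae (Filter.Eventually.of_forall key)]
    exact hmp.integral_comp
      (MeasurableEquiv.piFinSuccAbove (fun _ : Fin (n + 1) => ℝ) j).measurableEmbedding F
  rw [hchange, hF]
  rw [integral_prod_mul (fun x : ℝ => (η j)⁻¹ * ρ (x / η j))
    (fun y : Fin n → ℝ => (⨆ k, (t (j.succAbove k) + y k)) *
      ∏ k, (η (j.succAbove k))⁻¹ * ρ (y k / η (j.succAbove k)))]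
  have h1 : (∫ x : ℝ, (η j)⁻¹ * ρ (x / η j)) = 1 := by
    rw [integral_const_mul, Measure.integral_comp_div ρ (η j), hρ_int,
      abs_of_pos (hη j)]
    simp [ne_of_gt (hη j)]
  have h2 : (∫ y : Fin n → ℝ, (⨆ k, ((t ∘ j.succAbove) k + y k)) *
      ∏ k, (η (j.succAbove k))⁻¹ * ρ (y k / η (j.succAbove k)))
      = ∫ y : Fin n → ℝ, (⨆ k, (t (j.succAbove k) + y k)) *
      ∏ k, (η (j.succAbove k))⁻¹ * ρ (y k / η (j.succAbove k)) := rfl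
  rw [h1, one_mul, h2]
  rfl
end

section
/- Derivative bounds for the regularized maximum: for every p ≥ 1 there exists a constant C > 0 (depending only on ρ and p) such that for every η ∈ (0,∞)^p, every t ∈ ℝ^p and every multi-index α = (α_1,…,α_p) of nonnegative integers with 1 ≤ |α| = α_1+⋯+α_p ≤ 4, one has |∂^{|α|} M_η / ∂t_1^{α_1}⋯∂t_p^{α_p} (t)| ≤ C · min{η_j : α_j ≠ 0} · ∏_{i : α_i ≠ 0} η_i^{−α_i}. -/
/-!
Write `M_η = max ⋆ K_η` with `K_η(u) = ∏ⱼ η_j⁻¹ ρ(-u_j / η_j)`. All derivatives fall on the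
kernel, `∂^α M_η = max ⋆ ∂^α K_η`, and `∫ |∂^α K_η| = ∏ⱼ η_j^{-α_j} ∫ |ρ^{(α_j)}|`. To gain the
factor `η_i` for a direction `i` with `α_i ≠ 0`, subtract from `max` the function
`q(s) = max(s with s_i replaced by t_i)`. It does not depend on `s_i`, so `∂^α (q ⋆ K_η) = 0`,
while `|max(t - u) - q(t - u)| ≤ |u_i| ≤ η_i` on the support of `∂^α K_η`.
-/

open MeasureTheory Function Set Finset
open scoped Convolution ContDiff

section IteratedFDeriv

variable {𝕜 E F : Type*} [NontriviallyNormedField 𝕜] [NormedAddCommGroup E] [NormedSpace 𝕜 E]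
  [NormedAddCommGroup F] [NormedSpace 𝕜 F]

theorem ContDiff.iteratedFDeriv_succ_apply_eq_iteratedFDeriv_fderiv_apply {f : E → F}
    (hf : ContDiff 𝕜 ∞ f) {n : ℕ} (x : E) (m : Fin (n + 1) → E) :
    iteratedFDeriv 𝕜 (n + 1) f x m =
      iteratedFDeriv 𝕜 n (fun y => fderiv 𝕜 f y (m (Fin.last n))) x (Fin.init m) := by
  rw [iteratedFDeriv_succ_apply_right,
    iteratedFDeriv_clm_apply_const_apply (hf.fderiv_right (m := ∞) (by simp)) (mod_cast le_top)]

theorem fderiv_apply_eq_zero_of_forall_add_smul_eq {f : E → F} {v : E}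
    (hv : ∀ x (δ : 𝕜), f (x + δ • v) = f x) (x : E) : fderiv 𝕜 f x v = 0 := by
  by_cases hf : DifferentiableAt 𝕜 f x
  · rw [← hf.lineDeriv_eq_fderiv, lineDeriv, funext (hv x), deriv_const]
  · rw [fderiv_zero_of_not_differentiableAt hf, zero_apply]

theorem ContDiff.iteratedFDeriv_apply_eq_zero_of_forall_add_smul_eq {f : E → F}
    (hf : ContDiff 𝕜 ∞ f) {v : E} (hv : ∀ x (δ : 𝕜), f (x + δ • v) = f x) {n : ℕ}
    (m : Fin n → E) (hm : v ∈ range m) (x : E) : iteratedFDeriv 𝕜 n f x m = 0 := by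
  induction n generalizing f with
  | zero => exact hm.choose.elim0
  | succ n ih =>
    rw [hf.iteratedFDeriv_succ_apply_eq_iteratedFDeriv_fderiv_apply]
    by_cases hlast : m (Fin.last n) = v
    · simp [hlast, fderiv_apply_eq_zero_of_forall_add_smul_eq hv]
    · refine ih ((hf.fderiv_right (m := ∞) (by simp)).clm_apply contDiff_const)
        (fun y δ => ?_) _ ?_
      · rw [← fderiv_comp_add_right, funext fun z => hv z δ]
      · obtain ⟨k, hk⟩ := hm
        obtain ⟨k, rfl⟩ := Fin.exists_castSucc_eq.mpr fun h => hlast (h ▸ hk)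
        exact ⟨k, hk⟩

end IteratedFDeriv

theorem support_iteratedDeriv_subset {𝕜 F : Type*} [NontriviallyNormedField 𝕜]
    [NormedAddCommGroup F] [NormedSpace 𝕜 F] (n : ℕ) (f : 𝕜 → F) :
    support (iteratedDeriv n f) ⊆ tsupport f := fun x hx =>
  support_iteratedFDeriv_subset (𝕜 := 𝕜) n fun h => hx <| by
    simp [iteratedDeriv_eq_iteratedFDeriv, h]

section Convolution

variable {𝕜 G E E' F : Type*} [RCLike 𝕜] [NormedAddCommGroup E] [NormedSpace 𝕜 E]
  [NormedAddCommGroup E'] [NormedSpace 𝕜 E'] [NormedAddCommGroup F] [NormedSpace 𝕜 F]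
  [NormedSpace ℝ F] [NormedAddCommGroup G] [MeasurableSpace G] [BorelSpace G]
  {μ : Measure G} [μ.IsAddLeftInvariant] (L : E →L[𝕜] E' →L[𝕜] F)

theorem convolution_apply_add_of_forall_add_eq {f : G → E} {g : G → E'} {v : G}
    (hf : ∀ s, f (s + v) = f s) (x : G) : (f ⋆[L, μ] g) (x + v) = (f ⋆[L, μ] g) x := by
  simp only [convolution_def]
  rw [← integral_add_left_eq_self _ v]
  simp_rw [add_comm v, hf, add_sub_add_right_eq_sub]

theorem abs_convolution_le_mul_integral [μ.IsNegInvariant] {f g : G → ℝ} (hg : Integrable g μ)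
    {x : G} {a : ℝ} (hfg : ∀ u ∈ support g, |f (x - u)| ≤ a) :
    |(f ⋆[ContinuousLinearMap.lsmul ℝ ℝ, μ] g) x| ≤ a * ∫ u, |g u| ∂μ := by
  rw [convolution_eq_swap, ← integral_const_mul, ← Real.norm_eq_abs]
  refine norm_integral_le_of_norm_le (hg.abs.const_mul a) (ae_of_all _ fun u => ?_)
  by_cases hu : g u = 0
  · simp [hu]
  · rw [ContinuousLinearMap.lsmul_apply, norm_smul, Real.norm_eq_abs, Real.norm_eq_abs]
    exact mul_le_mul_of_nonneg_right (hfg u hu) (abs_nonneg _)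

theorem integral_add_mul_eq_convolution [μ.IsNegInvariant] (f K : G → ℝ) (x : G) :
    ∫ h, f (x + h) * K h ∂μ = (f ⋆[ContinuousLinearMap.lsmul ℝ ℝ, μ] fun u => K (-u)) x := by
  rw [convolution_eq_swap, ← integral_neg_eq_self]
  simp [sub_eq_add_neg]

variable [NormedSpace 𝕜 G]

theorem iteratedFDeriv_convolution_eq_zero_of_forall_add_smul_eq {f : G → E} {g : G → E'}
    (hcg : HasCompactSupport g) (hf : LocallyIntegrable f μ) (hg : ContDiff 𝕜 ∞ g) {v : G}
    (hv : ∀ s (δ : 𝕜), f (s + δ • v) = f s) {n : ℕ} (m : Fin n → G) (hm : v ∈ range m) (x : G) :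
    iteratedFDeriv 𝕜 n (f ⋆[L, μ] g) x m = 0 :=
  (hcg.contDiff_convolution_right L hf hg).iteratedFDeriv_apply_eq_zero_of_forall_add_smul_eq
    (fun x δ => convolution_apply_add_of_forall_add_eq L (hv · δ) x) m hm x

variable [SFinite μ]

theorem fderiv_convolution_right_apply {f : G → E} {g : G → E'}
    (hcg : HasCompactSupport g) (hf : LocallyIntegrable f μ) (hg : ContDiff 𝕜 1 g) (x v : G) :
    fderiv 𝕜 (f ⋆[L, μ] g) x v = (f ⋆[L, μ] fun y => fderiv 𝕜 g y v) x := by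
  rw [(hcg.hasFDerivAt_convolution_right L hf hg x).fderiv,
    convolution_precompR_apply L hf (hcg.fderiv 𝕜) (hg.continuous_fderiv one_ne_zero)]

theorem iteratedFDeriv_convolution_right_apply {f : G → E} {g : G → E'}
    (hcg : HasCompactSupport g) (hf : LocallyIntegrable f μ) (hg : ContDiff 𝕜 ∞ g) {n : ℕ}
    (x : G) (m : Fin n → G) :
    iteratedFDeriv 𝕜 n (f ⋆[L, μ] g) x m = (f ⋆[L, μ] fun y => iteratedFDeriv 𝕜 n g y m) x := by
  induction n generalizing g x with
  | zero => simp
  | succ n ih =>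
    have hg' : ContDiff 𝕜 ∞ fun y => fderiv 𝕜 g y (m (Fin.last n)) :=
      (hg.fderiv_right (m := ∞) (by simp)).clm_apply contDiff_const
    simp only [(hcg.contDiff_convolution_right L hf
        hg).iteratedFDeriv_succ_apply_eq_iteratedFDeriv_fderiv_apply,
      hg.iteratedFDeriv_succ_apply_eq_iteratedFDeriv_fderiv_apply,
      fderiv_convolution_right_apply L hcg hf (hg.of_le (mod_cast le_top))]
    exact ih (hcg.fderiv_apply 𝕜 _) hg' x (Fin.init m)

end Convolution

theorem abs_ciSup_sub_ciSup_le {ι : Type*} [Finite ι] [Nonempty ι] {a b : ι → ℝ} {d : ℝ}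
    (h : ∀ j, |a j - b j| ≤ d) : |(⨆ j, a j) - ⨆ j, b j| ≤ d := by
  have key : ∀ a b : ι → ℝ, (∀ j, |a j - b j| ≤ d) → (⨆ j, a j) ≤ (⨆ j, b j) + d :=
    fun a b h => ciSup_le fun j => by
      linarith [le_ciSup (Finite.bddAbove_range b) j, (abs_le.mp (h j)).2]
  rw [abs_sub_le_iff]
  constructor
  · linarith [key a b h]
  · linarith [key b a fun j => abs_sub_comm (a j) (b j) ▸ h j]

theorem Fin.card_filter_univ_castSucc {α : Type*} [DecidableEq α] {n : ℕ}
    (m : Fin (n + 1) → α) (a : α) :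
    #{k | m k = a} = #{k : Fin n | m k.castSucc = a} + if m (Fin.last n) = a then 1 else 0 := by
  simp only [card_filter, Fin.sum_univ_castSucc]

variable {ι : Type*} [Fintype ι]

theorem lipschitzWith_ciSup [Nonempty ι] : LipschitzWith 1 fun s : ι → ℝ => ⨆ j, s j :=
  LipschitzWith.of_dist_le_mul fun a b => by
    simpa [Real.dist_eq] using abs_ciSup_sub_ciSup_le fun j => (dist_le_pi_dist a b j)

theorem abs_ciSup_sub_ciSup_update_le [Nonempty ι] [DecidableEq ι] (s : ι → ℝ) (i : ι) (x : ℝ) :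
    |(⨆ j, s j) - ⨆ j, update s i x j| ≤ |s i - x| := by
  refine abs_ciSup_sub_ciSup_le fun j => ?_
  rcases eq_or_ne j i with rfl | hj
  · rw [update_self]
  · rw [update_of_ne hj, sub_self, abs_zero]
    exact abs_nonneg _

section ProdKernel

def prodKernel (c : ι → ℝ → ℝ) (y : ι → ℝ) : ℝ := ∏ j, c j (y j)

variable {c : ι → ℝ → ℝ}

theorem prodKernel_eq_mul_prod_erase [DecidableEq ι] (y : ι → ℝ) (i : ι) :
    prodKernel c y = c i (y i) * ∏ j ∈ univ.erase i, c j (y j) :=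
  (mul_prod_erase _ _ (mem_univ i)).symm

theorem prodKernel_apply_ne_zero {y : ι → ℝ} (hy : prodKernel c y ≠ 0) (j : ι) : c j (y j) ≠ 0 :=
  prod_ne_zero_iff.mp hy j (mem_univ j)

theorem contDiff_prodKernel {n : WithTop ℕ∞} (hc : ∀ j, ContDiff ℝ n (c j)) :
    ContDiff ℝ n (prodKernel c) :=
  contDiff_prod fun j _ => (hc j).comp (contDiff_apply ℝ ℝ j)

theorem hasCompactSupport_prodKernel (hc : ∀ j, HasCompactSupport (c j)) :
    HasCompactSupport (prodKernel c) :=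
  HasCompactSupport.intro (isCompact_univ_pi hc) fun _ hy => by
    obtain ⟨j, hj⟩ := not_forall.mp (mt Set.mem_univ_pi.mpr hy)
    exact prod_eq_zero (mem_univ j) (image_eq_zero_of_notMem_tsupport hj)

theorem integrable_prodKernel (hc : ∀ j, Integrable (c j)) : Integrable (prodKernel c) :=
  Integrable.fintype_prod hc

theorem integral_abs_prodKernel :
    ∫ y, |prodKernel c y| = ∏ j, ∫ u, |c j u| := by
  simp only [prodKernel, abs_prod]
  exact integral_fintype_prod_volume_eq_prod (𝕜 := ℝ) (E := fun _ => ℝ) fun j u => |c j u|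

theorem fderiv_prodKernel_apply_single [DecidableEq ι] (hc : ∀ j, Differentiable ℝ (c j))
    (y : ι → ℝ) (i : ι) :
    fderiv ℝ (prodKernel c) y (Pi.single i 1) = prodKernel (update c i (deriv (c i))) y := by
  have hline : (fun t : ℝ => prodKernel c (y + t • Pi.single i 1)) =
      fun t => c i (y i + t) * ∏ j ∈ univ.erase i, c j (y j) := by
    funext t
    rw [prodKernel_eq_mul_prod_erase _ i]
    congr 1
    · simp
    · exact prod_congr rfl fun j hj => by simp [ne_of_mem_erase hj]
  have hrest : ∏ j ∈ univ.erase i, update c i (deriv (c i)) j (y j) =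
      ∏ j ∈ univ.erase i, c j (y j) :=
    prod_congr rfl fun j hj => by rw [update_of_ne (ne_of_mem_erase hj)]
  have hdiff : Differentiable ℝ (prodKernel c) := by unfold prodKernel; fun_prop
  rw [← (hdiff y).lineDeriv_eq_fderiv, lineDeriv, hline, prodKernel_eq_mul_prod_erase _ i,
    update_self, hrest]
  exact (((hc i).differentiableAt.hasDerivAt.comp_const_add (y i) 0).mul_const _).deriv.trans
    (by rw [add_zero])

theorem iteratedFDeriv_prodKernel_apply_single [DecidableEq ι] (hc : ∀ j, ContDiff ℝ ∞ (c j))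
    {n : ℕ} (m : Fin n → ι) (y : ι → ℝ) :
    iteratedFDeriv ℝ n (prodKernel c) y (fun k => Pi.single (m k) 1) =
      prodKernel (fun j => iteratedDeriv #{k | m k = j} (c j)) y := by
  induction n generalizing c with
  | zero => simp
  | succ n ih =>
    set i := m (Fin.last n)
    have hc' : ∀ j, ContDiff ℝ ∞ (update c i (deriv (c i)) j) := by
      intro j
      rcases eq_or_ne j i with rfl | hj
      · simpa using (contDiff_infty_iff_deriv.mp (hc _)).2
      · simpa [hj] using hc j
    have hderiv : (fun z => fderiv ℝ (prodKernel c) z (Pi.single i 1)) =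
        prodKernel (update c i (deriv (c i))) :=
      funext fun z => fderiv_prodKernel_apply_single (fun j => (hc j).differentiable (by simp)) z i
    rw [(contDiff_prodKernel hc).iteratedFDeriv_succ_apply_eq_iteratedFDeriv_fderiv_apply, hderiv]
    refine (ih hc' (fun k => m k.castSucc)).trans (congrArg (prodKernel · y) (funext fun j => ?_))
    rw [Fin.card_filter_univ_castSucc]
    rcases eq_or_ne j i with rfl | hj
    · rw [update_self, if_pos rfl, ← iteratedDeriv_succ']
    · rw [update_of_ne hj, if_neg (Ne.symm hj), add_zero]

theorem abs_iteratedFDeriv_convolution_prodKernel_le [DecidableEq ι] {f : (ι → ℝ) → ℝ}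
    (hf : LocallyIntegrable f) (hc : ∀ j, ContDiff ℝ ∞ (c j))
    (hcs : ∀ j, HasCompactSupport (c j)) {n : ℕ} (m : Fin n → ι) {i : ι} {a : ℝ}
    (ha : support (c i) ⊆ Icc (-a) a) {t : ι → ℝ} (hft : ∀ u : ι → ℝ, |u i| ≤ a → |f (t - u)| ≤ a) :
    |iteratedFDeriv ℝ n (f ⋆ prodKernel c) t (fun k => Pi.single (m k) 1)| ≤
      a * ∏ j, ∫ u, |iteratedDeriv #{k | m k = j} (c j) u| := by
  set d : ι → ℝ → ℝ := fun j => iteratedDeriv #{k | m k = j} (c j)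
  have hd : Integrable (prodKernel d) := integrable_prodKernel fun j =>
    ((hc j).continuous_iteratedDeriv _ (mod_cast le_top)).integrable_of_hasCompactSupport
      ((hcs j).mono' (support_iteratedDeriv_subset _ _))
  rw [iteratedFDeriv_convolution_right_apply _ (hasCompactSupport_prodKernel hcs) hf
    (contDiff_prodKernel hc)]
  simp_rw [iteratedFDeriv_prodKernel_apply_single hc, ← integral_abs_prodKernel]
  refine abs_convolution_le_mul_integral hd fun u hu => hft u (abs_le.mpr ?_)
  exact closure_minimal ha isClosed_Icc
    (support_iteratedDeriv_subset _ _ (prodKernel_apply_ne_zero hu i))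

theorem abs_iteratedFDeriv_ciSup_convolution_prodKernel_le [DecidableEq ι]
    (hc : ∀ j, ContDiff ℝ ∞ (c j)) (hcs : ∀ j, HasCompactSupport (c j)) {n : ℕ}
    (m : Fin n → ι) {i : ι} (hi : i ∈ range m) {a : ℝ} (ha : support (c i) ⊆ Icc (-a) a)
    (t : ι → ℝ) :
    |iteratedFDeriv ℝ n ((fun s : ι → ℝ => ⨆ j, s j) ⋆ prodKernel c) t
        (fun k => Pi.single (m k) 1)| ≤
      a * ∏ j, ∫ u, |iteratedDeriv #{k | m k = j} (c j) u| := by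
  have : Nonempty ι := ⟨i⟩
  set K := prodKernel c
  set fmax : (ι → ℝ) → ℝ := fun s => ⨆ j, s j
  set q : (ι → ℝ) → ℝ := fun s => fmax (update s i (t i))
  have hfmax : Continuous fmax := lipschitzWith_ciSup.continuous
  have hq : Continuous q := hfmax.comp (continuous_id.update i continuous_const)
  have hr : Continuous (fmax - q) := hfmax.sub hq
  have hK : ContDiff ℝ ∞ K := contDiff_prodKernel hc
  have hKs : HasCompactSupport K := hasCompactSupport_prodKernel hcs
  have hsplit : fmax ⋆ K = (fmax - q) ⋆ K + q ⋆ K := by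
    rw [← ConvolutionExists.add_distrib
      (hKs.convolutionExists_right _ hr.locallyIntegrable hK.continuous)
      (hKs.convolutionExists_right _ hq.locallyIntegrable hK.continuous), sub_add_cancel]
  have hq_zero : iteratedFDeriv ℝ n (q ⋆ K) t (fun k => Pi.single (m k) 1) = 0 := by
    refine iteratedFDeriv_convolution_eq_zero_of_forall_add_smul_eq _ hKs hq.locallyIntegrable hK
      (v := Pi.single i 1) (fun s δ => congrArg fmax (funext fun j => ?_)) _ ?_ t
    · rcases eq_or_ne j i with rfl | hj <;> simp [*]
    · obtain ⟨k, hk⟩ := hi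
      exact ⟨k, congrArg (Pi.single · 1) hk⟩
  rw [hsplit, iteratedFDeriv_add_apply
    ((hKs.contDiff_convolution_right _ hr.locallyIntegrable hK).contDiffAt.of_le (mod_cast le_top))
    ((hKs.contDiff_convolution_right _ hq.locallyIntegrable hK).contDiffAt.of_le (mod_cast le_top)),
    add_apply, hq_zero, add_zero]
  refine abs_iteratedFDeriv_convolution_prodKernel_le hr.locallyIntegrable hc hcs m ha
    fun u hu => (abs_ciSup_sub_ciSup_update_le _ _ _).trans ?_
  simpa using hu

end ProdKernel

section Dilation

variable {ρ : ℝ → ℝ}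

theorem ContDiff.dilation {n : WithTop ℕ∞} (hρ : ContDiff ℝ n ρ) (c : ℝ) :
    ContDiff ℝ n fun u => |c| * ρ (c * u) :=
  contDiff_const.mul (hρ.comp (contDiff_const.mul contDiff_id))

theorem iteratedDeriv_dilation (hρ : ContDiff ℝ ∞ ρ) (c : ℝ) (k : ℕ) (u : ℝ) :
    iteratedDeriv k (fun u => |c| * ρ (c * u)) u = |c| * (c ^ k * iteratedDeriv k ρ (c * u)) := by
  rw [iteratedDeriv_const_mul_field, iteratedDeriv_comp_const_mul (hρ.of_le (mod_cast le_top))]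

theorem integral_abs_iteratedDeriv_dilation (hρ : ContDiff ℝ ∞ ρ) {c : ℝ} (hc : c ≠ 0) (k : ℕ) :
    ∫ u, |iteratedDeriv k (fun u => |c| * ρ (c * u)) u| = |c| ^ k * ∫ u, |iteratedDeriv k ρ u| := by
  simp_rw [iteratedDeriv_dilation hρ, abs_mul, abs_pow, abs_abs]
  rw [integral_const_mul, integral_const_mul,
    Measure.integral_comp_mul_left (fun u => |iteratedDeriv k ρ u|), abs_inv, smul_eq_mul,
    mul_left_comm, mul_inv_cancel_left₀ (abs_ne_zero.mpr hc)]

theorem support_dilation_subset (hρ : support ρ ⊆ Icc (-1) 1) {c : ℝ} (hc : c ≠ 0) :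
    support (fun u => |c| * ρ (c * u)) ⊆ Icc (-|c|⁻¹) |c|⁻¹ := by
  intro u hu
  have h := abs_le.mpr (hρ (right_ne_zero_of_mul hu))
  rw [abs_mul] at h
  rw [← one_div]
  exact abs_le.mp ((le_div_iff₀' (abs_pos.mpr hc)).mpr h)

end Dilation

section RegularizedMax

noncomputable def regularizedMax (ρ : ℝ → ℝ) (η t : ι → ℝ) : ℝ :=
  ∫ h : ι → ℝ, (⨆ j, (t j + h j)) * ∏ j, (η j)⁻¹ * ρ (h j / η j)

variable {ρ : ℝ → ℝ} {η : ι → ℝ}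

theorem regularizedMax_eq_convolution (hη : ∀ j, 0 < η j) :
    regularizedMax ρ η =
      (fun s => ⨆ j, s j) ⋆ prodKernel fun j u => |-(η j)⁻¹| * ρ (-(η j)⁻¹ * u) := by
  refine funext fun t => (integral_add_mul_eq_convolution _ _ t).trans ?_
  congr 1
  refine funext fun u => prod_congr rfl fun j _ => ?_
  dsimp only
  rw [abs_neg, abs_inv, abs_of_pos (hη j), Pi.neg_apply, neg_div, div_eq_inv_mul, neg_mul]

theorem abs_iteratedFDeriv_regularizedMax_le [DecidableEq ι] (hρ : ContDiff ℝ ∞ ρ)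
    (hρ_supp : support ρ ⊆ Icc (-1) 1) (hη : ∀ j, 0 < η j) {n : ℕ} (m : Fin n → ι) {i : ι}
    (hi : i ∈ range m) (t : ι → ℝ) :
    |iteratedFDeriv ℝ n (regularizedMax ρ η) t (fun k => Pi.single (m k) 1)| ≤
      η i * ∏ j, (η j)⁻¹ ^ #{k | m k = j} * ∫ u, |iteratedDeriv #{k | m k = j} ρ u| := by
  have hc : ∀ j, -(η j)⁻¹ ≠ 0 := fun j => neg_ne_zero.mpr (inv_ne_zero (hη j).ne')
  have hcη : ∀ j, |-(η j)⁻¹| = (η j)⁻¹ := fun j => by rw [abs_neg, abs_inv, abs_of_pos (hη j)]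
  have hsupp : ∀ j, support (fun u => |-(η j)⁻¹| * ρ (-(η j)⁻¹ * u)) ⊆ Icc (-η j) (η j) :=
    fun j => by simpa only [hcη, inv_inv] using support_dilation_subset hρ_supp (hc j)
  rw [regularizedMax_eq_convolution hη]
  refine (abs_iteratedFDeriv_ciSup_convolution_prodKernel_le (fun j => hρ.dilation _)
    (fun j => .of_support_subset_isCompact isCompact_Icc (hsupp j)) m hi (hsupp i) t).trans_eq ?_
  simp_rw [integral_abs_iteratedDeriv_dilation hρ (hc _), hcη]

end RegularizedMax

theorem regularized_max_deriv_bound_general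
    (ρ : ℝ → ℝ)
    (hρ_smooth : ContDiff ℝ (⊤ : ℕ∞) ρ)
    (hρ_supp : Function.support ρ ⊆ Set.Icc (-1 : ℝ) 1)
    (p : ℕ) :
    ∃ C > (0 : ℝ), ∀ (η : Fin p → ℝ), (∀ j, 0 < η j) →
      ∀ (M : (Fin p → ℝ) → ℝ),
        (∀ t : Fin p → ℝ,
          M t = ∫ h : Fin p → ℝ,
            (⨆ j, (t j + h j)) * ∏ j, (η j)⁻¹ * ρ (h j / η j)) →
        ∀ (α : Fin p → ℕ), 1 ≤ ∑ j, α j → ∑ j, α j ≤ 4 →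
          ∀ (ι : Fin (∑ j, α j) → Fin p),
            (∀ j, (Finset.univ.filter fun k => ι k = j).card = α j) →
            ∀ t : Fin p → ℝ,
              |iteratedFDeriv ℝ (∑ j, α j) M t (fun k => Pi.single (ι k) (1 : ℝ))| ≤
                C * (⨅ j : {j : Fin p // α j ≠ 0}, η j) * ∏ j, ((η j)⁻¹) ^ (α j) := by
  classical
  set R : ℕ → ℝ := fun k => ∫ u, |iteratedDeriv k ρ u|
  set B := 1 + ∑ k ∈ range 5, R k
  refine ⟨B ^ p, by positivity, fun η hη M hM α hα1 hα4 ι hι t => ?_⟩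
  have hRB : ∀ j, R (α j) ≤ B := fun j => by
    have hαj : α j ∈ range 5 := mem_range.mpr (Nat.lt_succ_of_le
      ((single_le_sum (fun j _ => Nat.zero_le (α j)) (mem_univ j)).trans hα4))
    linarith [single_le_sum (f := R) (fun k _ => integral_nonneg fun u => abs_nonneg _) hαj]
  obtain ⟨i, -, hi⟩ := exists_ne_zero_of_sum_ne_zero (Nat.one_le_iff_ne_zero.mp hα1)
  have : Nonempty {j // α j ≠ 0} := ⟨⟨i, hi⟩⟩
  obtain ⟨⟨i, hi⟩, hmin⟩ := exists_eq_ciInf_of_finite (f := fun j : {j // α j ≠ 0} => η j)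
  obtain ⟨k, hk⟩ := card_pos.mp ((hι i).symm ▸ Nat.pos_of_ne_zero hi)
  have hη_pow : ∀ j, 0 ≤ (η j)⁻¹ ^ α j := fun j => pow_nonneg (inv_nonneg.mpr (hη j).le) _
  rw [show M = regularizedMax ρ η from funext hM, ← hmin]
  refine (abs_iteratedFDeriv_regularizedMax_le hρ_smooth hρ_supp hη ι
    ⟨k, (mem_filter.mp hk).2⟩ t).trans ?_
  simp_rw [hι]
  calc η i * ∏ j, (η j)⁻¹ ^ α j * R (α j) ≤ η i * ∏ j, (η j)⁻¹ ^ α j * B :=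
        mul_le_mul_of_nonneg_left (prod_le_prod
          (fun j _ => mul_nonneg (hη_pow j) (integral_nonneg fun u => abs_nonneg _))
          fun j _ => mul_le_mul_of_nonneg_left (hRB j) (hη_pow j)) (hη i).le
    _ = B ^ p * η i * ∏ j, (η j)⁻¹ ^ α j := by
        rw [prod_mul_distrib, prod_const, card_univ, Fintype.card_fin]
        ring

/-- **Derivative bounds for the regularized maximum.**
For every `p ≥ 1` there exists `C > 0` (depending only on `ρ` and `p`) such that for
every `η ∈ (0,∞)^p`, every `t ∈ ℝ^p` and every multi-index `α` with `1 ≤ |α| ≤ 4`,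
`|∂^α M_η(t)| ≤ C · min{η_j : α_j ≠ 0} · ∏_{α_i ≠ 0} η_i^{−α_i}`.
The iterated partial derivative `∂^α M_η(t)` is expressed as the `|α|`-th iterated
Fréchet derivative evaluated on a family of standard basis vectors in which the `j`-th
basis vector occurs exactly `α_j` times. -/
theorem regularized_max_deriv_bound
    (ρ : ℝ → ℝ)
    (hρ_smooth : ContDiff ℝ (⊤ : ℕ∞) ρ)
    (hρ_nonneg : ∀ x, 0 ≤ ρ x)
    (hρ_supp : Function.support ρ ⊆ Set.Icc (-1 : ℝ) 1)
    (hρ_int : ∫ x : ℝ, ρ x = 1)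
    (hρ_mean : ∫ x : ℝ, x * ρ x = 0)
    (p : ℕ) (hp : 1 ≤ p) :
    ∃ C > (0 : ℝ), ∀ (η : Fin p → ℝ), (∀ j, 0 < η j) →
      ∀ (M : (Fin p → ℝ) → ℝ),
        (∀ t : Fin p → ℝ,
          M t = ∫ h : Fin p → ℝ,
            (⨆ j, (t j + h j)) * ∏ j, (η j)⁻¹ * ρ (h j / η j)) →
        ∀ (α : Fin p → ℕ), 1 ≤ ∑ j, α j → ∑ j, α j ≤ 4 →
          ∀ (ι : Fin (∑ j, α j) → Fin p),
            (∀ j, (Finset.univ.filter fun k => ι k = j).card = α j) →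
            ∀ t : Fin p → ℝ,
              |iteratedFDeriv ℝ (∑ j, α j) M t (fun k => Pi.single (ι k) (1 : ℝ))| ≤
                C * (⨅ j : {j : Fin p // α j ≠ 0}, η j) * ∏ j, ((η j)⁻¹) ^ (α j) :=
  regularized_max_deriv_bound_general ρ hρ_smooth hρ_supp p
end

section
/- Variational formula for the n-th root of the determinant: for every positive definite Hermitian n×n complex matrix A, one has (det A)^{1/n} = (1/n) · inf { tr(AB) : B is a positive definite Hermitian n×n complex matrix with det B = 1 }, where tr(AB) is real and positive for such A and B. -/
open scoped ComplexOrder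

/-!
Writing `A = Rᴴ R`, the product `A B` has the trace and determinant of the positive definite
matrix `R B Rᴴ`, so AM-GM on the eigenvalues of the latter gives
`n (det A · det B)^(1/n) ≤ re tr (A B)`. When `det B = 1`, equality is attained at
`B = (det A)^(1/n) A⁻¹`, where `A B` is a scalar matrix.
-/

namespace Matrix.PosDef

variable {ι 𝕜 : Type*} [Fintype ι] [DecidableEq ι] [RCLike 𝕜] {A B M : Matrix ι ι 𝕜}

theorem card_mul_re_det_rpow_le_re_trace [Nonempty ι] (hM : M.PosDef) :
    Fintype.card ι * RCLike.re M.det ^ (Fintype.card ι : ℝ)⁻¹ ≤ RCLike.re M.trace := by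
  have amgm := Real.geom_mean_le_arith_mean Finset.univ (fun _ ↦ 1) hM.1.eigenvalues
    (fun _ _ ↦ zero_le_one) (by simp [Fintype.card_pos]) (fun i _ ↦ (hM.eigenvalues_pos i).le)
  simp only [Real.rpow_one, one_mul, Finset.sum_const, Finset.card_univ, nsmul_eq_mul,
    mul_one] at amgm
  rw [hM.1.det_eq_prod_eigenvalues, hM.1.trace_eq_sum_eigenvalues, ← RCLike.ofReal_prod,
    ← RCLike.ofReal_sum, RCLike.ofReal_re, RCLike.ofReal_re]
  rwa [le_div_iff₀' (mod_cast Fintype.card_pos)] at amgm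

theorem exists_isUnit_eq_conjTranspose_mul_self (hA : A.PosDef) :
    ∃ R : Matrix ι ι 𝕜, IsUnit R ∧ A = Rᴴ * R := by
  open MatrixOrder in
  obtain ⟨R, rfl⟩ := CStarAlgebra.nonneg_iff_eq_star_mul_self.mp hA.posSemidef.nonneg
  exact ⟨R, isUnit_of_mul_isUnit_right hA.isUnit, rfl⟩

theorem exists_posDef_trace_eq_and_det_eq_mul (hA : A.PosDef) (hB : B.PosDef) :
    ∃ M : Matrix ι ι 𝕜, M.PosDef ∧ M.trace = (A * B).trace ∧ M.det = (A * B).det := by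
  obtain ⟨R, hR, rfl⟩ := hA.exists_isUnit_eq_conjTranspose_mul_self
  refine ⟨R * B * Rᴴ, (IsUnit.posDef_star_right_conjugate_iff hR).mpr hB, ?_, ?_⟩
  · rw [trace_mul_comm, ← mul_assoc]
  · simp only [det_mul]
    ring

theorem trace_mul_pos [Nonempty ι] (hA : A.PosDef) (hB : B.PosDef) : 0 < (A * B).trace := by
  obtain ⟨M, hM, htr, -⟩ := hA.exists_posDef_trace_eq_and_det_eq_mul hB
  exact htr ▸ hM.trace_pos

theorem card_mul_re_det_rpow_le_re_trace_mul [Nonempty ι] (hA : A.PosDef) (hB : B.PosDef) :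
    Fintype.card ι * RCLike.re (A * B).det ^ (Fintype.card ι : ℝ)⁻¹ ≤
      RCLike.re (A * B).trace := by
  obtain ⟨M, hM, htr, hdet⟩ := hA.exists_posDef_trace_eq_and_det_eq_mul hB
  exact htr ▸ hdet ▸ hM.card_mul_re_det_rpow_le_re_trace

theorem isLeast_re_trace_mul [Nonempty ι] (hA : A.PosDef) :
    IsLeast {x : ℝ | ∃ B : Matrix ι ι 𝕜, B.PosDef ∧ B.det = 1 ∧ x = RCLike.re (A * B).trace}
      (Fintype.card ι * RCLike.re A.det ^ (Fintype.card ι : ℝ)⁻¹) := by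
  obtain ⟨d, hd, hdA⟩ := RCLike.pos_iff_exists_ofReal.mp hA.det_pos
  set c := d ^ (Fintype.card ι : ℝ)⁻¹
  have hc : 0 < c := by positivity
  have hcd : c ^ Fintype.card ι = d := Real.rpow_inv_natCast_pow hd.le Fintype.card_ne_zero
  rw [← hdA, RCLike.ofReal_re]
  constructor
  · refine ⟨(c : 𝕜) • A⁻¹, hA.inv.smul (RCLike.ofReal_pos.mpr hc), ?_, ?_⟩
    · rw [det_smul, det_nonsing_inv, ← hdA, ← RCLike.ofReal_pow, hcd, Ring.inverse_eq_inv,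
        mul_inv_cancel₀ (RCLike.ofReal_ne_zero.mpr hd.ne')]
    · rw [mul_smul_comm, mul_nonsing_inv _ (A.isUnit_iff_isUnit_det.mp hA.isUnit), trace_smul,
        trace_one, smul_eq_mul, RCLike.re_ofReal_mul, RCLike.natCast_re, mul_comm]
  · rintro _ ⟨B, hB, hBdet, rfl⟩
    simpa [det_mul, hBdet, ← hdA] using hA.card_mul_re_det_rpow_le_re_trace_mul hB

end Matrix.PosDef

/-- **Variational formula for the n-th root of the determinant.**
For every positive definite Hermitian `n × n` complex matrix `A`,
`(det A)^(1/n) = (1/n) · inf { tr (A * B) | B positive definite Hermitian, det B = 1 }`;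
moreover `tr (A * B)` is real and positive for every such `B`. -/
theorem det_nth_root_eq_inf_trace
    (n : ℕ) (hn : 0 < n)
    (A : Matrix (Fin n) (Fin n) ℂ) (hA : A.PosDef) :
    A.det.re ^ ((n : ℝ)⁻¹) =
      (1 / (n : ℝ)) * sInf {x : ℝ | ∃ B : Matrix (Fin n) (Fin n) ℂ,
        B.PosDef ∧ B.det = 1 ∧ x = ((A * B).trace).re} ∧
    ∀ B : Matrix (Fin n) (Fin n) ℂ, B.PosDef → B.det = 1 →
      ((A * B).trace).im = 0 ∧ 0 < ((A * B).trace).re := by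
  have : NeZero n := ⟨hn.ne'⟩
  refine ⟨?_, fun B hB _ ↦ ?_⟩
  · have hleast := hA.isLeast_re_trace_mul
    simp only [RCLike.re_to_complex, Fintype.card_fin] at hleast
    rw [hleast.csInf_eq]
    field_simp
  · exact (RCLike.pos_iff.mp (hA.trace_mul_pos hB)).symm
end
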